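/- If k = n, then the Markov chain with transition matrix P is not positive recurrent; in particular, no stationary distribution π of P exists. -/

import Mathlib

open scoped Classical BigOperators

noncomputable section

/-- Number of zero entries of a state `x ∈ ℕ^(n-1)`. -/
def numZeros {n : ℕ} (x : Fin (n-1) → ℕ) : ℕ :=
  (Finset.univ.filter (fun i => x i = 0)).card

/-- The state `x + e_l`. -/
def addE {n : ℕ} (x : Fin (n-1) → ℕ) (l : Fin (n-1)) : Fin (n-1) → ℕ :=
  Function.update x l (x l + 1)

/-- The state `x - 1` (componentwise). -/
def subOne {n : ℕ} (x : Fin (n-1) → ℕ) : Fin (n-1) → ℕ := fun i => x i - 1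

/-- The transition matrix `P` of the chain. -/
noncomputable def P (n k : ℕ) (x y : Fin (n-1) → ℕ) : ℝ :=
  if numZeros x = 0 then
    (if y = subOne x then ((k:ℝ) - n + 1) / k
     else if ∃ l, y = addE x l then 1 / k else 0)
  else if numZeros x = n - 1 then
    (if ∃ l, y = addE x l then 1 / ((n:ℝ) - 1) else 0)
  else
    (if ∃ l, x l = 0 ∧ y = addE x l then
        ((k:ℝ) - n + 1 + numZeros x) / (k * numZeros x)
     else if ∃ l, 1 ≤ x l ∧ y = addE x l then 1 / k
     else 0)

/-- `π` is a stationary distribution of `P`. -/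
def IsStationaryMC (n k : ℕ) (π : (Fin (n-1) → ℕ) → ℝ) : Prop :=
  (∀ x, 0 ≤ π x) ∧ Summable π ∧ (∑' x, π x) = 1 ∧
  ∀ y, Summable (fun x => π x * P n k x y) ∧ (∑' x, π x * P n k x y) = π y

namespace Aux

variable {n : ℕ}

def σs {n : ℕ} (x : Fin (n-1) → ℕ) : ℕ := ∑ i, x i

lemma sum_addE (x : Fin (n-1) → ℕ) (l : Fin (n-1)) : σs (addE x l) = σs x + 1 := by
  unfold σs addE
  rw [Finset.sum_update_of_mem (Finset.mem_univ l)]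
  have : ∑ i, x i = x l + ∑ i ∈ Finset.univ \ {l}, x i := by
    conv_lhs => rw [show x = Function.update x l (x l) by simp [Function.update_eq_self]]
    rw [Finset.sum_update_of_mem (Finset.mem_univ l)]
  omega

lemma addE_injective (x : Fin (n-1) → ℕ) : Function.Injective (addE x) := by
  intro l l' h
  by_contra hne
  have h1 : addE x l l = x l + 1 := by simp [addE]
  have h2 : addE x l' l = x l := by
    unfold addE
    rw [Function.update_of_ne (fun hh => hne hh)]
  rw [h] at h1
  omega

lemma sum_subOne_le (x : Fin (n-1) → ℕ) : σs (subOne x) ≤ σs x := by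
  unfold σs subOne; exact Finset.sum_le_sum (fun i _ => Nat.sub_le _ _)

lemma sum_le_sum_subOne_add (x : Fin (n-1) → ℕ) : σs x ≤ σs (subOne x) + (n-1) := by
  unfold σs subOne
  calc ∑ i, x i ≤ ∑ i : Fin (n-1), (x i - 1 + 1) := Finset.sum_le_sum (fun i _ => by omega)
    _ = (∑ i : Fin (n-1), (x i - 1)) + (n-1) := by
        rw [Finset.sum_add_distrib]; simp [Finset.card_univ]

lemma subOne_ne_addE (x : Fin (n-1) → ℕ) (l : Fin (n-1)) : subOne x ≠ addE x l := by
  intro h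
  have := sum_addE x l
  rw [← h] at this
  have := sum_subOne_le x
  omega

lemma numZeros_le (x : Fin (n-1) → ℕ) : numZeros x ≤ n - 1 := by
  unfold numZeros
  calc _ ≤ Finset.univ.card := Finset.card_filter_le _ _
    _ = n - 1 := by simp


lemma P_nonneg (hn : 3 ≤ n) (x y : Fin (n-1) → ℕ) : 0 ≤ P n n x y := by
  have h3n : (3:ℝ) ≤ (n:ℝ) := by exact_mod_cast hn
  unfold P
  split_ifs <;>
    first
      | positivity
      | (rw [show ((n:ℝ) - ↑n + 1) = 1 by ring]; positivity)
      | (rw [show ((n:ℝ) - ↑n + 1 + (numZeros x:ℝ)) = 1 + (numZeros x:ℝ) by ring]; positivity)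
      | (exact div_nonneg zero_le_one (by linarith))

lemma P_support (x y : Fin (n-1) → ℕ) (h : P n n x y ≠ 0) :
    y = subOne x ∨ ∃ l, y = addE x l := by
  unfold P at h
  split_ifs at h with h2 h3 h4 h5 h6 h7 <;>
    first
      | tauto
      | (obtain ⟨l, _, hl⟩ := h6; exact Or.inr ⟨l, hl⟩)
      | (obtain ⟨l, _, hl⟩ := h7; exact Or.inr ⟨l, hl⟩)

lemma P_subOne (hn : 3 ≤ n) (x : Fin (n-1) → ℕ) :
    P n n x (subOne x) = if numZeros x = 0 then 1/(n:ℝ) else 0 := by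
  have hne : ∀ l, subOne x ≠ addE x l := subOne_ne_addE x
  unfold P
  by_cases h0 : numZeros x = 0
  · rw [if_pos h0, if_pos rfl, if_pos h0]
    all_goals ring_nf
  rw [if_neg h0, if_neg h0]
  by_cases h1 : numZeros x = n - 1
  · rw [if_pos h1, if_neg (by rintro ⟨l, hl⟩; exact hne l hl)]
  rw [if_neg h1, if_neg (by rintro ⟨l, _, hl⟩; exact hne l hl),
    if_neg (by rintro ⟨l, _, hl⟩; exact hne l hl)]

lemma P_addE (hn : 3 ≤ n) (x : Fin (n-1) → ℕ) (l : Fin (n-1)) :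
    P n n x (addE x l) =
      if numZeros x = 0 then 1/(n:ℝ)
      else if numZeros x = n - 1 then 1/((n:ℝ)-1)
      else if x l = 0 then (1 + (numZeros x:ℝ))/(n * numZeros x) else 1/(n:ℝ) := by
  have hne : addE x l ≠ subOne x := (subOne_ne_addE x l).symm
  have hex : ∃ l', addE x l = addE x l' := ⟨l, rfl⟩
  unfold P
  by_cases h0 : numZeros x = 0
  · rw [if_pos h0, if_neg hne, if_pos hex, if_pos h0]
    all_goals ring_nf
  rw [if_neg h0, if_neg h0]
  by_cases h1 : numZeros x = n - 1
  · rw [if_pos h1, if_pos hex, if_pos h1]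
  rw [if_neg h1, if_neg h1]
  by_cases h2 : x l = 0
  · rw [if_pos ⟨l, h2, rfl⟩, if_pos h2]
    all_goals ring_nf
  · have hno : ¬ ∃ l', x l' = 0 ∧ addE x l = addE x l' := by
      rintro ⟨l', hl'0, hl'⟩
      exact h2 (by rw [addE_injective x hl']; exact hl'0)
    rw [if_neg hno, if_pos ⟨l, by omega, rfl⟩, if_neg h2]


lemma row_le (hn : 3 ≤ n) (x : Fin (n-1) → ℕ) (A : Finset (Fin (n-1) → ℕ)) :
    ∑ y ∈ A, P n n x y ≤ 1 := by
  classical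
  set S : Finset (Fin (n-1) → ℕ) :=
    insert (subOne x) (Finset.image (addE x) Finset.univ) with hS
  have hnotmem : subOne x ∉ Finset.image (addE x) Finset.univ := by
    simp only [Finset.mem_image, Finset.mem_univ, true_and]
    rintro ⟨l, hl⟩
    exact subOne_ne_addE x l hl.symm
  have hsum_S : ∑ y ∈ S, P n n x y
      = P n n x (subOne x) + ∑ l, P n n x (addE x l) := by
    rw [hS, Finset.sum_insert hnotmem,
      Finset.sum_image (fun l _ l' _ h => addE_injective x h)]
  have hS_le : ∑ y ∈ S, P n n x y ≤ 1 := by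
    rw [hsum_S, P_subOne hn x]
    have hn0 : (n:ℝ) ≠ 0 := by positivity
    have hcard : (Finset.univ : Finset (Fin (n-1))).card = n - 1 := by simp
    by_cases h0 : numZeros x = 0
    · rw [if_pos h0]
      have : ∀ l, P n n x (addE x l) = 1/(n:ℝ) := fun l => by
        rw [P_addE hn x l, if_pos h0]
      rw [Finset.sum_congr rfl (fun l _ => this l), Finset.sum_const, hcard]
      have hc : ((n-1 : ℕ) : ℝ) = (n:ℝ) - 1 := by
        rw [Nat.cast_sub (by omega)]; norm_num
      rw [nsmul_eq_mul, hc]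
      field_simp; linarith
    rw [if_neg h0]
    by_cases h1 : numZeros x = n - 1
    · have hne1 : ((n:ℝ) - 1) ≠ 0 := by
        have : (3:ℝ) ≤ (n:ℝ) := by exact_mod_cast hn
        linarith
      have : ∀ l, P n n x (addE x l) = 1/((n:ℝ)-1) := fun l => by
        rw [P_addE hn x l, if_neg h0, if_pos h1]
      rw [Finset.sum_congr rfl (fun l _ => this l), Finset.sum_const, hcard]
      have hc : ((n-1 : ℕ) : ℝ) = (n:ℝ) - 1 := by
        rw [Nat.cast_sub (by omega)]; norm_num
      rw [nsmul_eq_mul, hc]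
      field_simp; linarith
    · have hval : ∀ l, P n n x (addE x l)
          = if x l = 0 then (1 + (numZeros x:ℝ))/(n * numZeros x) else 1/(n:ℝ) :=
        fun l => by rw [P_addE hn x l, if_neg h0, if_neg h1]
      rw [Finset.sum_congr rfl (fun l _ => hval l), Finset.sum_ite,
        Finset.sum_const, Finset.sum_const]
      have hzc : (Finset.univ.filter (fun l => x l = 0)).card = numZeros x := rfl
      have hnzc : (Finset.univ.filter (fun l => ¬ x l = 0)).card = (n-1) - numZeros x := by
        have := Finset.card_filter_add_card_filter_not
          (s := (Finset.univ : Finset (Fin (n-1)))) (p := fun l => x l = 0)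
        rw [hcard] at this
        omega
      rw [hzc, hnzc, nsmul_eq_mul, nsmul_eq_mul]
      have hjle : numZeros x ≤ n - 1 := numZeros_le x
      have hj1 : 1 ≤ numZeros x := by omega
      have hjR : (1:ℝ) ≤ (numZeros x : ℝ) := by exact_mod_cast hj1
      have hcast : (((n-1) - numZeros x : ℕ) : ℝ) = (n:ℝ) - 1 - (numZeros x:ℝ) := by
        rw [Nat.cast_sub hjle, Nat.cast_sub (by omega)]; norm_num
      rw [hcast]
      have hjne : (numZeros x : ℝ) ≠ 0 := by linarith
      rw [zero_add]
      have e1 : (numZeros x:ℝ) * ((1 + (numZeros x:ℝ))/(n * numZeros x))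
          = (1 + (numZeros x:ℝ))/(n:ℝ) := by field_simp
      rw [e1]
      have : ((1 + (numZeros x:ℝ))/(n:ℝ)) + ((n:ℝ) - 1 - numZeros x) * (1/(n:ℝ)) = 1 := by
        field_simp; ring
      linarith
  -- now compare
  have h2 : ∑ y ∈ A, P n n x y ≤ ∑ y ∈ A.filter (· ∈ S), P n n x y := by
    rw [Finset.sum_filter_of_ne]
    intro y hy hne
    rcases P_support x y hne with h | ⟨l, hl⟩
    · rw [h]; exact Finset.mem_insert_self _ _
    · rw [hl]; exact Finset.mem_insert_of_mem (Finset.mem_image_of_mem _ (Finset.mem_univ l))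
  calc ∑ y ∈ A, P n n x y ≤ ∑ y ∈ A.filter (· ∈ S), P n n x y := h2
    _ ≤ ∑ y ∈ S, P n n x y := Finset.sum_le_sum_of_subset_of_nonneg
        (fun y hy => (Finset.mem_filter.mp hy).2) (fun y _ _ => P_nonneg hn x y)
    _ ≤ 1 := hS_le


def ball (n M : ℕ) : Finset (Fin (n-1) → ℕ) :=
  (Fintype.piFinset fun _ => Finset.range (M+1)).filter (fun y => σs y ≤ M)

lemma mem_ball {M : ℕ} {y : Fin (n-1) → ℕ} : y ∈ ball n M ↔ σs y ≤ M := by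
  unfold ball
  rw [Finset.mem_filter]
  constructor
  · exact fun h => h.2
  · intro h
    refine ⟨?_, h⟩
    rw [Fintype.mem_piFinset]
    intro i
    rw [Finset.mem_range]
    have : y i ≤ σs y := Finset.single_le_sum (fun j _ => Nat.zero_le (y j)) (Finset.mem_univ i)
    omega

lemma ball_mono {M M' : ℕ} (h : M ≤ M') : ball n M ⊆ ball n M' := by
  intro y hy
  rw [mem_ball] at *
  omega

lemma g_le_inv (hn : 3 ≤ n) (x : Fin (n-1) → ℕ) {M : ℕ} (hx : M ≤ σs x) :
    ∑ y ∈ ball n M, P n n x y ≤ 1/(n:ℝ) := by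
  have hne : ∀ y ∈ ball n M, P n n x y ≠ 0 → y = subOne x := by
    intro y hy h
    rcases P_support x y h with h1 | ⟨l, hl⟩
    · exact h1
    · exfalso
      have h2 := mem_ball.mp hy
      rw [hl] at h2
      rw [sum_addE] at h2
      omega
  rw [← Finset.sum_filter_of_ne hne]
  calc ∑ y ∈ (ball n M).filter (· = subOne x), P n n x y
      ≤ ∑ y ∈ {subOne x}, P n n x y := Finset.sum_le_sum_of_subset_of_nonneg
        (fun y hy => by
          rw [Finset.mem_singleton]; exact (Finset.mem_filter.mp hy).2)
        (fun y _ _ => P_nonneg hn x y)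
    _ = P n n x (subOne x) := Finset.sum_singleton _ _
    _ ≤ 1/(n:ℝ) := by
        rw [P_subOne hn x]
        split_ifs
        · exact le_refl _
        · positivity

lemma g_zero (hn : 3 ≤ n) (x : Fin (n-1) → ℕ) {M : ℕ} (hx : M + n ≤ σs x) :
    ∑ y ∈ ball n M, P n n x y = 0 := by
  refine Finset.sum_eq_zero (fun y hy => ?_)
  by_contra h
  have h2 := mem_ball.mp hy
  rcases P_support x y h with h1 | ⟨l, hl⟩
  · have h3 := sum_le_sum_subOne_add x
    rw [← h1] at h3
    omega
  · rw [hl, sum_addE] at h2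
    omega


lemma stepB (π : (Fin (n-1) → ℕ) → ℝ)
    (hst : ∀ y, Summable (fun x => π x * P n n x y) ∧ (∑' x, π x * P n n x y) = π y)
    (M : ℕ) :
    ∑ y ∈ ball n M, π y = ∑' x, π x * ∑ y ∈ ball n M, P n n x y := by
  have h1 : ∑ y ∈ ball n M, π y = ∑ y ∈ ball n M, ∑' x, π x * P n n x y :=
    Finset.sum_congr rfl (fun y _ => ((hst y).2).symm)
  rw [h1, ← Summable.tsum_finsetSum (fun y _ => (hst y).1)]
  exact tsum_congr (fun x => (Finset.mul_sum _ _ _).symm)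

lemma indicator_eq (π : (Fin (n-1) → ℕ) → ℝ) (M : ℕ) :
    (fun x => if σs x ≤ M then π x else 0) = Set.indicator {x | σs x ≤ M} π := by
  funext x
  rw [Set.indicator_apply]
  simp only [Set.mem_setOf_eq]

lemma tsum_indicator (π : (Fin (n-1) → ℕ) → ℝ) (M : ℕ) :
    ∑' x, (if σs x ≤ M then π x else 0) = ∑ y ∈ ball n M, π y := by
  rw [tsum_eq_sum (s := ball n M) (fun x hx => by
    rw [if_neg]; intro h; exact hx (mem_ball.mpr h))]
  exact Finset.sum_congr rfl (fun y hy => if_pos (mem_ball.mp hy))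

lemma stepD (hn : 3 ≤ n) (π : (Fin (n-1) → ℕ) → ℝ)
    (hp0 : ∀ x, 0 ≤ π x) (hsum : Summable π)
    (hst : ∀ y, Summable (fun x => π x * P n n x y) ∧ (∑' x, π x * P n n x y) = π y)
    (M : ℕ) :
    ∑ y ∈ ball n (M+1), π y
      ≤ (1 - 1/(n:ℝ)) * ∑ y ∈ ball n M, π y + (1/(n:ℝ)) * ∑ y ∈ ball n (M+n), π y := by
  have hnR : (3:ℝ) ≤ (n:ℝ) := by exact_mod_cast hn
  set F : (Fin (n-1) → ℕ) → ℝ := fun x => π x * ∑ y ∈ ball n (M+1), P n n x y with hF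
  set H : (Fin (n-1) → ℕ) → ℝ := fun x =>
    (1 - 1/(n:ℝ)) * (if σs x ≤ M then π x else 0)
      + (1/(n:ℝ)) * (if σs x ≤ M+n then π x else 0) with hH
  have hFH : ∀ x, F x ≤ H x := by
    intro x
    rcases le_or_gt (σs x) M with h | h
    · rw [hH]
      simp only
      rw [if_pos h, if_pos (by omega)]
      have h1 : F x ≤ π x * 1 :=
        mul_le_mul_of_nonneg_left (row_le hn x _) (hp0 x)
      calc F x ≤ π x * 1 := h1
        _ = (1 - 1/(n:ℝ)) * π x + (1/(n:ℝ)) * π x := by ring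
    rcases le_or_gt (σs x) (M+n) with h2 | h2
    · rw [hH]
      simp only
      rw [if_neg (by omega), if_pos h2]
      have h1 : F x ≤ π x * (1/(n:ℝ)) :=
        mul_le_mul_of_nonneg_left (g_le_inv hn x (by omega)) (hp0 x)
      calc F x ≤ π x * (1/(n:ℝ)) := h1
        _ = (1 - 1/(n:ℝ)) * 0 + (1/(n:ℝ)) * π x := by ring
    · rw [hH]
      simp only
      rw [if_neg (by omega), if_neg (by omega), hF]
      simp only
      rw [g_zero hn x (by omega)]
      simp
  have hsum1 : Summable (fun x => if σs x ≤ M then π x else 0) := by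
    rw [indicator_eq]; exact hsum.indicator _
  have hsum2 : Summable (fun x => if σs x ≤ M+n then π x else 0) := by
    rw [indicator_eq]; exact hsum.indicator _
  have hHsum : Summable H := by
    exact ((hsum1.mul_left _).add (hsum2.mul_left _))
  have hFnn : ∀ x, 0 ≤ F x := fun x =>
    mul_nonneg (hp0 x) (Finset.sum_nonneg (fun y _ => P_nonneg hn x y))
  have hFsum : Summable F := Summable.of_nonneg_of_le hFnn hFH hHsum
  have hle : ∑' x, F x ≤ ∑' x, H x := Summable.tsum_le_tsum hFH hFsum hHsum
  have hHtsum : ∑' x, H x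
      = (1 - 1/(n:ℝ)) * ∑ y ∈ ball n M, π y + (1/(n:ℝ)) * ∑ y ∈ ball n (M+n), π y := by
    rw [hH, Summable.tsum_add (hsum1.mul_left _) (hsum2.mul_left _), tsum_mul_left, tsum_mul_left,
      tsum_indicator, tsum_indicator]
  rw [stepB π hst (M+1)]
  rw [← hHtsum]
  exact hle



open Filter

lemma abstract_limit (n : ℕ) (hn : 3 ≤ n) (a : ℕ → ℝ) (hmono : Monotone a)
    (hle : ∀ M, a M ≤ 1)
    (hstep : ∀ M, a (M+1) ≤ (1 - 1/(n:ℝ)) * a M + (1/(n:ℝ)) * a (M+n))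
    (htend : Tendsto a atTop (nhds 1)) : a 0 = 1 := by
  have hnR : (3:ℝ) ≤ (n:ℝ) := by exact_mod_cast hn
  have hn0 : (0:ℝ) < (n:ℝ) := by linarith
  have hstep' : ∀ M, (n:ℝ) * (a (M+1) - a M) ≤ a (M+n) - a M := by
    intro M
    have h1 := mul_le_mul_of_nonneg_left (hstep M) (le_of_lt hn0)
    have h2 : (n:ℝ) * ((1 - 1/(n:ℝ)) * a M + (1/(n:ℝ)) * a (M+n))
        = ((n:ℝ) - 1) * a M + a (M+n) := by
      field_simp
    rw [h2] at h1
    nlinarith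
  have key : ∀ M, a (M+1) ≤ a M := by
    intro M
    -- bound for all L
    have hbound : ∀ L, (n:ℝ) * (a (M+L) - a M)
        ≤ (1 - a M) + ((n:ℝ) - 1) * (1 - a (M+1)) := by
      intro L
      have tele : ∀ (K : ℕ), ∑ j ∈ Finset.range L, (a (K+j+1) - a (K+j)) = a (K+L) - a K :=
        fun K => by
          have := Finset.sum_range_sub (fun j => a (K+j)) L
          simpa [add_assoc] using this
      have lhs : ∑ j ∈ Finset.range L, (n:ℝ) * (a (M+j+1) - a (M+j))
          = (n:ℝ) * (a (M+L) - a M) := by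
        rw [← Finset.mul_sum, tele M]
      have swap : ∑ j ∈ Finset.range L, (a (M+j+n) - a (M+j))
          = ∑ i ∈ Finset.range n, (a (M+i+L) - a (M+i)) := by
        have e1 : ∀ j, a (M+j+n) - a (M+j)
            = ∑ i ∈ Finset.range n, (a (M+j+i+1) - a (M+j+i)) := fun j =>
          (Finset.sum_range_sub (fun i => a (M+j+i)) n).symm
        rw [Finset.sum_congr rfl (fun j _ => e1 j), Finset.sum_comm]
        refine Finset.sum_congr rfl (fun i _ => ?_)
        have e2 : ∀ j, a (M+j+i+1) - a (M+j+i) = a ((M+i)+j+1) - a ((M+i)+j) := fun j => by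
          rw [show M+j+i = (M+i)+j by omega]
        rw [Finset.sum_congr rfl (fun j _ => e2 j), tele (M+i)]
      have big : (n:ℝ) * (a (M+L) - a M) ≤ ∑ i ∈ Finset.range n, (a (M+i+L) - a (M+i)) := by
        rw [← lhs, ← swap]
        refine Finset.sum_le_sum (fun j _ => ?_)
        exact hstep' (M+j)
      have bnd : ∑ i ∈ Finset.range n, (a (M+i+L) - a (M+i))
          ≤ (1 - a M) + ((n:ℝ) - 1) * (1 - a (M+1)) := by
        have step1 : ∑ i ∈ Finset.range n, (a (M+i+L) - a (M+i))
            ≤ ∑ i ∈ Finset.range n, (1 - a (M+i)) :=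
          Finset.sum_le_sum (fun i _ => by
            have := hle (M+i+L); linarith)
        have step2 : ∑ i ∈ Finset.range n, (1 - a (M+i))
            = (1 - a M) + ∑ i ∈ Finset.Ico 1 n, (1 - a (M+i)) := by
          rw [Finset.range_eq_Ico, Finset.sum_eq_sum_Ico_succ_bot (by omega : 0 < n)]
          simp
        have step3 : ∑ i ∈ Finset.Ico 1 n, (1 - a (M+i))
            ≤ ∑ i ∈ Finset.Ico 1 n, (1 - a (M+1)) :=
          Finset.sum_le_sum (fun i hi => by
            have h1 : 1 ≤ i := (Finset.mem_Ico.mp hi).1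
            have := hmono (show M+1 ≤ M+i by omega)
            linarith)
        have step4 : ∑ i ∈ Finset.Ico 1 n, (1 - a (M+1)) = ((n:ℝ) - 1) * (1 - a (M+1)) := by
          rw [Finset.sum_const, Nat.card_Ico, nsmul_eq_mul]
          congr 1
          rw [Nat.cast_sub (by omega)]
          norm_num
        linarith
      linarith
    -- take limit
    have ht1 : Tendsto (fun L => a (M + L)) atTop (nhds 1) := by
      have : (fun L => a (M + L)) = a ∘ (fun L => L + M) := by
        funext L; simp [Nat.add_comm]
      rw [this]
      exact htend.comp (tendsto_add_atTop_nat M)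
    have ht2 : Tendsto (fun L => (n:ℝ) * (a (M + L) - a M)) atTop
        (nhds ((n:ℝ) * (1 - a M))) := by
      exact (ht1.sub tendsto_const_nhds).const_mul _
    have hfin : (n:ℝ) * (1 - a M) ≤ (1 - a M) + ((n:ℝ) - 1) * (1 - a (M+1)) :=
      le_of_tendsto ht2 (Filter.Eventually.of_forall hbound)
    nlinarith [hle M, hle (M+1), hmono (Nat.le_succ M)]
  have hconst : ∀ M, a M = a 0 := by
    intro M
    induction M with
    | zero => rfl
    | succ M ih =>
        exact le_antisymm (le_trans (key M) (le_of_eq ih)) (hmono (Nat.zero_le _))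
  have : Tendsto (fun _ : ℕ => a 0) atTop (nhds 1) := by
    have e : a = fun _ => a 0 := funext hconst
    rw [← e]
    exact htend
  exact tendsto_nhds_unique tendsto_const_nhds this

end Aux

/-- instability (no stationary distribution) when `k = n`. -/
theorem stmt_3 (n k : ℕ) (hn : 3 ≤ n) (hk : k = n) :
    ¬ ∃ π : (Fin (n-1) → ℕ) → ℝ, IsStationaryMC n k π := by
  subst k
  rintro ⟨π, hp0, hsum, htot, hst⟩
  set a : ℕ → ℝ := fun M => ∑ y ∈ Aux.ball n M, π y with ha
  have hmono : Monotone a := fun M M' h =>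
    Finset.sum_le_sum_of_subset_of_nonneg (Aux.ball_mono h) (fun y _ _ => hp0 y)
  have hle : ∀ M, a M ≤ 1 := fun M =>
    htot ▸ Summable.sum_le_tsum _ (fun x _ => hp0 x) hsum
  have hstepa : ∀ M, a (M+1) ≤ (1 - 1/(n:ℝ)) * a M + (1/(n:ℝ)) * a (M+n) :=
    fun M => Aux.stepD hn π hp0 hsum hst M
  have htend : Filter.Tendsto a Filter.atTop (nhds 1) := by
    have h1 : HasSum π 1 := htot ▸ hsum.hasSum
    have h2 : Filter.Tendsto (fun M => Aux.ball n M) Filter.atTop Filter.atTop :=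
      Filter.tendsto_atTop_finset_of_monotone (fun M M' h => Aux.ball_mono h)
        (fun y => ⟨Aux.σs y, Aux.mem_ball.mpr le_rfl⟩)
    exact h1.comp h2
  have ha0 : a 0 = 1 := Aux.abstract_limit n hn a hmono hle hstepa htend
  set z : Fin (n-1) → ℕ := fun _ => 0 with hz
  have hball0 : Aux.ball n 0 = {z} := by
    ext y
    rw [Aux.mem_ball, Finset.mem_singleton]
    constructor
    · intro h
      funext i
      have h0 : Aux.σs y = 0 := Nat.le_zero.mp h
      have := Finset.sum_eq_zero_iff.mp h0 i (Finset.mem_univ i)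
      simpa [hz] using this
    · intro h
      rw [h]
      simp [Aux.σs, hz]
  have hπz : π z = 1 := by
    rw [← ha0, ha]
    simp only [hball0, Finset.sum_singleton]
  have hzero : ∀ x, x ≠ z → π x = 0 := by
    intro x hx
    have hpair : π z + π x ≤ 1 := by
      have h1 := Summable.sum_le_tsum ({z, x} : Finset (Fin (n-1) → ℕ)) (fun y _ => hp0 y) hsum
      rw [Finset.sum_pair (Ne.symm hx), htot] at h1
      exact h1
    have := hp0 x
    linarith [hπz ▸ hpair]
  have hP00 : P n n z z = 0 := by
    have hnz : numZeros z = n - 1 := by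
      simp [numZeros, hz]
    unfold P
    rw [if_neg (by omega), if_pos hnz, if_neg]
    rintro ⟨l, hl⟩
    have := congrFun hl l
    simp [hz, addE] at this
  have hfin : ∑' x, π x * P n n x z = 0 := by
    have hz0 : ∀ x, π x * P n n x z = 0 := fun x => by
      by_cases hx : x = z
      · rw [hx, hP00, mul_zero]
      · rw [hzero x hx, zero_mul]
    rw [tsum_congr hz0, tsum_zero]
  have h0 := (hst z).2
  rw [hfin, hπz] at h0
  norm_num at h0
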